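/- Let d be a positive non-square integer. There exist infinitely many primes p such that p divides x_{8r} + 1 for some positive integer r, where (x_n, y_n) is the sequence of positive solutions of the Pell equation x² − d·y² = 1. -/

import Mathlib

/-!
With `u k = x (2^(k+2))`, doubling gives `u (k+1) = 2 u k ^ 2 - 1`. Hence every prime factor of
`u k` divides `u (k+1) + 1 = x (8 · 2^k) + 1`, and `u k ∣ u m ^ 2 - 1` for `k < m`, so the `u k`
are pairwise coprime non-units and their prime factors are pairwise distinct.
-/

open Function

namespace Pell

theorem Solution₁.x_sq {d : ℤ} (a : Solution₁ d) : (a ^ 2).x = 2 * a.x ^ 2 - 1 := by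
  rw [sq, x_mul, ← sq, a.prop_x]
  ring

theorem IsFundamental.one_lt_x_pow {d : ℤ} {a : Solution₁ d} (h : IsFundamental a) {n : ℕ}
    (hn : n ≠ 0) : 1 < (a ^ n).x := by
  have hpos := Solution₁.x_pow_pos h.x_pos n
  have hne : (a ^ n).x ≠ 1 := fun h1 => hn <| by
    have := Solution₁.eq_one_of_x_eq_one h.d_pos.ne' h1
    exact_mod_cast (h.zpow_eq_one_iff n).1 (by rwa [zpow_natCast])
  omega

end Pell

section DoublingRecurrence

variable {u : ℕ → ℤ} (hu : ∀ k, u (k + 1) = 2 * u k ^ 2 - 1)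
include hu

theorem dvd_sq_sub_one_of_doubling {k m : ℕ} (hkm : k < m) : u k ∣ u m ^ 2 - 1 := by
  induction m, hkm using Nat.le_induction with
  | base =>
    rw [show u (k + 1) ^ 2 - 1 = u k * (u k * 4 * (u k ^ 2 - 1)) by rw [hu]; ring]
    exact dvd_mul_right _ _
  | succ m _ ih =>
    rw [show u (m + 1) ^ 2 - 1 = 4 * u m ^ 2 * (u m ^ 2 - 1) by rw [hu]; ring]
    exact dvd_mul_of_dvd_right ih _

theorem pairwise_isCoprime_of_doubling : Pairwise (IsCoprime on u) := by
  have hlt : ∀ {k m}, k < m → IsCoprime (u k) (u m) := fun {k m} hkm => by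
    obtain ⟨c, hc⟩ := dvd_sq_sub_one_of_doubling hu hkm
    exact ⟨-c, u m, by linear_combination hc⟩
  intro k m hkm
  rcases hkm.lt_or_gt with h | h
  · exact hlt h
  · exact (hlt h).symm

end DoublingRecurrence

theorem infinite_setOf_prime_dvd_of_pairwise_isCoprime {ι : Type*} [Infinite ι] {u : ι → ℤ}
    (hu : ∀ i, ¬IsUnit (u i)) (hcop : Pairwise (IsCoprime on u)) :
    {p : ℕ | p.Prime ∧ ∃ i, (p : ℤ) ∣ u i}.Infinite := by
  set f : ι → ℕ := fun i => (u i).natAbs.minFac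
  have hprime : ∀ i, (f i).Prime := fun i =>
    Nat.minFac_prime fun h => hu i (Int.isUnit_iff_natAbs_eq.2 h)
  have hdvd : ∀ i, (f i : ℤ) ∣ u i := fun i => Int.ofNat_dvd_left.2 (Nat.minFac_dvd _)
  have hinj : Injective f := fun i j hij => by
    by_contra hne
    have hunit := (hcop hne).isUnit_of_dvd' (hdvd i) (hij ▸ hdvd j)
    exact (hprime i).not_isUnit (Int.ofNat_isUnit.1 hunit)
  exact Set.infinite_of_injective_forall_mem hinj fun i => ⟨hprime i, i, hdvd i⟩

theorem stmt19 (d : ℤ)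
    (a : Pell.Solution₁ d) (ha : Pell.IsFundamental a) :
    {p : ℕ | p.Prime ∧ ∃ r : ℕ, 0 < r ∧ (p : ℤ) ∣ (a ^ (8 * r)).x + 1}.Infinite := by
  set u : ℕ → ℤ := fun k => (a ^ 2 ^ (k + 2)).x
  have hrec : ∀ k, u (k + 1) = 2 * u k ^ 2 - 1 := fun k => by
    simp only [u, pow_succ 2 (k + 2), pow_mul, Pell.Solution₁.x_sq]
  have hunit : ∀ k, ¬IsUnit (u k) := fun k hk => by
    have := ha.one_lt_x_pow (n := 2 ^ (k + 2)) (by positivity)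
    rcases Int.isUnit_iff.1 hk with h | h <;> simp only [u] at h <;> omega
  refine (infinite_setOf_prime_dvd_of_pairwise_isCoprime hunit
    (pairwise_isCoprime_of_doubling hrec)).mono ?_
  rintro p ⟨hp, k, hpk⟩
  refine ⟨hp, 2 ^ k, by positivity, ?_⟩
  have hx : (a ^ (8 * 2 ^ k)).x + 1 = 2 * u k ^ 2 := by
    rw [show 8 * 2 ^ k = 2 ^ (k + 1 + 2) by ring]
    linear_combination hrec k
  rw [hx]
  exact dvd_mul_of_dvd_right (dvd_pow hpk two_ne_zero) 2
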